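/- If an ℝ>0-edge-labelled graph G contains a non-metric cycle (as a subgraph), then G contains an induced non-metric cycle. -/

import Mathlib

/-- An `ℝ>0`-edge-labelled graph: an irreflexive symmetric adjacency relation on the
vertex set together with a symmetric assignment of a positive real label to each edge. -/
structure ELGraph (V : Type*) where
  Adj : V → V → Prop
  label : V → V → ℝ
  adj_symm : ∀ x y, Adj x y → Adj y x
  adj_irrefl : ∀ x, ¬ Adj x x
  label_symm : ∀ x y, label x y = label y x
  label_pos : ∀ x y, Adj x y → 0 < label x y


/-- The cyclic successor of an index in `Fin n`. -/
def Fin.cycSucc {n : ℕ} (i : Fin n) : Fin n := ⟨(i.1 + 1) % n, Nat.mod_lt _ i.pos⟩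

namespace ELGraph

variable {V : Type*}

/-- A walk: a nonempty list of vertices with consecutive vertices joined by edges. -/
def IsWalk (G : ELGraph V) (l : List V) : Prop :=
  l ≠ [] ∧ l.Chain' G.Adj

/-- The length of a walk: the sum of the labels of its (consecutive) edges. -/
def walkLen (G : ELGraph V) (l : List V) : ℝ :=
  ((l.zip l.tail).map fun p => G.label p.1 p.2).sum

/-- A walk connecting `x` and `y`. -/
def IsWalkBetween (G : ELGraph V) (x y : V) (l : List V) : Prop :=
  G.IsWalk l ∧ l.head? = some x ∧ l.getLast? = some y

/-- A path connecting `x` and `y`: a walk with no repeated vertices. -/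
def IsPathBetween (G : ELGraph V) (x y : V) (l : List V) : Prop :=
  G.IsWalkBetween x y l ∧ l.Nodup

/-- `G` is connected: any two vertices are joined by a path. -/
def Connected (G : ELGraph V) : Prop :=
  ∀ x y, ∃ l, G.IsPathBetween x y l

/-- `d` is the shortest-path distance of `G`: `d x x = 0`, and for distinct `x, y`,
`d x y` is the minimum length of a path connecting `x` and `y`. -/
def IsShortestDist (G : ELGraph V) (d : V → V → ℝ) : Prop :=
  (∀ x, d x x = 0) ∧
  ∀ x y, x ≠ y →
    (∃ l, G.IsPathBetween x y l ∧ G.walkLen l = d x y) ∧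
    ∀ l, G.IsPathBetween x y l → d x y ≤ G.walkLen l

/-- A cycle on `n ≥ 3` vertices, given as an injective map `Fin n → V` with consecutive
vertices (cyclically, including the wrap-around pair) joined by edges. -/
def IsCycle (G : ELGraph V) {n : ℕ} (c : Fin n → V) : Prop :=
  3 ≤ n ∧ Function.Injective c ∧ ∀ i, G.Adj (c i) (c i.cycSucc)

/-- The total length of the `n` edges of a cycle. -/
noncomputable def cycleLen (G : ELGraph V) {n : ℕ} (c : Fin n → V) : ℝ :=
  ∑ i, G.label (c i) (c i.cycSucc)

/-- The edge of the cycle at position `i₀` is a long edge: its label is strictly greater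
than the sum of the labels of all the remaining edges of the cycle. -/
def IsLongEdge (G : ELGraph V) {n : ℕ} (c : Fin n → V) (i₀ : Fin n) : Prop :=
  G.cycleLen c - G.label (c i₀) (c i₀.cycSucc) < G.label (c i₀) (c i₀.cycSucc)

/-- A non-metric cycle: a cycle having a long edge. -/
def IsNonMetricCycle (G : ELGraph V) {n : ℕ} (c : Fin n → V) : Prop :=
  G.IsCycle c ∧ ∃ i₀, G.IsLongEdge c i₀

/-- An induced cycle: the only edges of `G` among its vertices are the cycle edges. -/
def IsInducedCycle (G : ELGraph V) {n : ℕ} (c : Fin n → V) : Prop :=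
  G.IsCycle c ∧ ∀ i j, G.Adj (c i) (c j) → j = i.cycSucc ∨ i = j.cycSucc

/-- An embedding of `A` into `B` as an induced subgraph: an injective map on vertices
such that two vertices are joined by an edge of label `ℓ` iff their images are. -/
def IsEmbedding {W : Type*} (A : ELGraph V) (B : ELGraph W) (e : V → W) : Prop :=
  Function.Injective e ∧
  ∀ x y, (A.Adj x y ↔ B.Adj (e x) (e y)) ∧ (A.Adj x y → B.label (e x) (e y) = A.label x y)

/-- An automorphism of `B`: a permutation of the vertices preserving edges, non-edges
and labels. -/
def IsAuto {W : Type*} (B : ELGraph W) (Φ : Equiv.Perm W) : Prop :=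
  ∀ x y, (B.Adj x y ↔ B.Adj (Φ x) (Φ y)) ∧ (B.Adj x y → B.label (Φ x) (Φ y) = B.label x y)

/-- A partial automorphism of `A` with domain `S`: an injective map preserving edges,
non-edges and labels. -/
def IsPartialAuto (A : ELGraph V) (S : Set V) (φ : S → V) : Prop :=
  Function.Injective φ ∧
  ∀ x y : S, (A.Adj x y ↔ A.Adj (φ x) (φ y)) ∧ (A.Adj x y → A.label (φ x) (φ y) = A.label x y)

end ELGraph

/-!
A shortest non-metric cycle is induced. A chord `c a c b` cuts the cycle into two arcs, each of
which closes up with the chord into a shorter cycle. If the chord is longer than the arc that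
avoids the long edge, the chord is a long edge of the cycle it closes with that arc; otherwise,
replacing that arc by the chord keeps the long edge of the original cycle long.
-/

open Finset Function Fin.NatCast

theorem Function.Periodic.sum_Ico_add_eq_sum_range {M : Type*} [AddCommMonoid M] {f : ℕ → M}
    {n : ℕ} (hf : Periodic f n) (a : ℕ) :
    ∑ t ∈ Ico a (a + n), f t = ∑ t ∈ range n, f t :=
  calc ∑ t ∈ Ico a (a + n), f t = ((Multiset.Ico a (a + n)).map (f ∘ (· % n))).sum :=
        sum_congr rfl fun t _ => (hf.map_mod_nat t).symm
    _ = ∑ t ∈ range n, f t := by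
        rw [← Multiset.map_map, Nat.multiset_Ico_map_mod]
        rfl

namespace Fin

variable {n : ℕ}

theorem val_cycSucc (i : Fin n) : i.cycSucc.val = (i.val + 1) % n := rfl

theorem cycSucc_eq_add_one [NeZero n] (i : Fin n) : i.cycSucc = i + 1 := by
  ext
  simp [val_cycSucc, val_add]

theorem val_cycSucc_of_lt {i : Fin n} (h : i.val + 1 < n) : i.cycSucc.val = i.val + 1 :=
  Nat.mod_eq_of_lt h

theorem cycSucc_last (m : ℕ) : (last m).cycSucc = 0 :=
  Fin.ext (Nat.mod_self _)

theorem natCast_injOn_Icc [NeZero n] {a b : ℕ} (hb : b < a + n) :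
    Set.InjOn (fun t : ℕ => (t : Fin n)) (Set.Icc a b) := by
  intro s hs t ht hst
  have hmod : s ≡ t [MOD n] := Fin.ext_iff.1 hst
  refine hmod.eq_of_abs_lt (abs_sub_lt_iff.2 ⟨?_, ?_⟩) <;>
    push_cast [Set.mem_Icc] at hs ht ⊢ <;> omega

end Fin

namespace ELGraph

variable {V : Type*} (G : ELGraph V)

/-- Cycles `c : Fin n → V` are read periodically as `fun t : ℕ => c t`, so that an arc of the
cycle is the stretch `p a, p (a + 1), …, p b` of a sequence `p : ℕ → V`. -/
def arcLen (p : ℕ → V) (a b : ℕ) : ℝ :=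
  ∑ t ∈ Ico a b, G.label (p t) (p (t + 1))

theorem cycleLen_eq_arcLen {n : ℕ} [NeZero n] (c : Fin n → V) (a : ℕ) :
    G.cycleLen c = G.arcLen (fun t : ℕ => c t) a (a + n) := by
  have hper : Periodic (fun t : ℕ => G.label (c t) (c ↑(t + 1))) n := fun t => by simp
  rw [arcLen, hper.sum_Ico_add_eq_sum_range, ← Fin.sum_univ_eq_sum_range, cycleLen]
  refine sum_congr rfl fun i _ => ?_
  simp [Fin.cycSucc_eq_add_one]

def arcCycle (p : ℕ → V) (a b : ℕ) : Fin (b - a + 1) → V :=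
  fun t => p (a + t)

variable {G} {p : ℕ → V} {a b : ℕ}

theorem arcCycle_cycSucc_of_lt {t : Fin (b - a + 1)} (ht : t.val < b - a) :
    arcCycle p a b t.cycSucc = p (a + t + 1) := by
  rw [arcCycle, Fin.val_cycSucc_of_lt (by omega), add_assoc]

theorem arcCycle_last (hab : a ≤ b) : arcCycle p a b (Fin.last _) = p b := by
  simp [arcCycle, Nat.add_sub_cancel' hab]

theorem arcCycle_last_cycSucc : arcCycle p a b (Fin.last _).cycSucc = p a := by
  simp [arcCycle, Fin.cycSucc_last]

theorem isCycle_arcCycle (hab : a + 2 ≤ b) (hinj : Set.InjOn p (Set.Icc a b))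
    (hadj : ∀ t ∈ Ico a b, G.Adj (p t) (p (t + 1))) (hclose : G.Adj (p b) (p a)) :
    G.IsCycle (arcCycle p a b) := by
  refine ⟨by omega, fun s t hst => ?_, fun t => ?_⟩
  · have := hinj (by simp; omega) (by simp; omega) hst
    ext
    omega
  · rcases t.le_last.lt_or_eq with ht | rfl
    · rw [arcCycle_cycSucc_of_lt ht]
      exact hadj _ (by simp; omega)
    · rw [arcCycle_last (by omega), arcCycle_last_cycSucc]
      exact hclose

theorem cycleLen_arcCycle (hab : a ≤ b) :
    G.cycleLen (arcCycle p a b) = G.arcLen p a b + G.label (p b) (p a) := by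
  rw [cycleLen, Fin.sum_univ_castSucc, arcLen, sum_Ico_eq_sum_range,
    ← Fin.sum_univ_eq_sum_range, arcCycle_last hab, arcCycle_last_cycSucc]
  congr 1
  refine sum_congr rfl fun t _ => ?_
  rw [arcCycle_cycSucc_of_lt (by simp), arcCycle, add_assoc]
  rfl

theorem IsCycle.exists_shorter_isNonMetricCycle_of_chord {n : ℕ} [NeZero n] {c : Fin n → V}
    (hc : G.IsCycle c) {a b r : ℕ} (hab : a + 2 ≤ b) (hba : b + 2 ≤ a + n)
    (hchord : G.Adj (c a) (c b)) (hr : r ∈ Ico a b)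
    (hlong : G.cycleLen c - G.label (c r) (c (r + 1)) < G.label (c r) (c (r + 1))) :
    ∃ m < n, ∃ d : Fin m → V, G.IsNonMetricCycle d := by
  set p : ℕ → V := fun t => c t
  have hadj : ∀ t, G.Adj (p t) (p (t + 1)) := fun t => by
    simpa [p, Fin.cycSucc_eq_add_one] using hc.2.2 t
  have hinj : ∀ {a' b' : ℕ}, b' < a' + n → Set.InjOn p (Set.Icc a' b') := fun h =>
    hc.2.1.comp_injOn (Fin.natCast_injOn_Icc h)
  have hpn : p (a + n) = p a := by simp [p]
  have hsplit : G.cycleLen c = G.arcLen p a b + G.arcLen p b (a + n) := by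
    rw [cycleLen_eq_arcLen G c a, arcLen, arcLen, arcLen,
      sum_Ico_consecutive _ (by omega) (by omega)]
  rw [Finset.mem_Ico] at hr
  by_cases hχ : G.arcLen p b (a + n) < G.label (p a) (p b)
  · refine ⟨a + n - b + 1, by omega, arcCycle p b (a + n),
      isCycle_arcCycle (by omega) (hinj (by omega)) (fun t _ => hadj t) (by rwa [hpn]),
      Fin.last _, ?_⟩
    rw [IsLongEdge, cycleLen_arcCycle (by omega), arcCycle_last (by omega),
      arcCycle_last_cycSucc, hpn]
    linarith
  · refine ⟨b - a + 1, by omega, arcCycle p a b,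
      isCycle_arcCycle hab (hinj (by omega)) (fun t _ => hadj t) (G.adj_symm _ _ hchord),
      ⟨r - a, by omega⟩, ?_⟩
    rw [IsLongEdge, cycleLen_arcCycle (by omega), arcCycle_cycSucc_of_lt (by simp; omega),
      G.label_symm (p b)]
    have hedge : G.label (p r) (p (r + 1)) = G.label (c r) (c (r + 1)) := by simp [p]
    simp only [arcCycle, Nat.add_sub_cancel' hr.1, hedge]
    linarith

theorem IsNonMetricCycle.exists_shorter_of_chord {n : ℕ} {c : Fin n → V}
    (hc : G.IsNonMetricCycle c) {i j : Fin n} (hij : G.Adj (c i) (c j)) (hj : j ≠ i.cycSucc)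
    (hi : i ≠ j.cycSucc) : ∃ m < n, ∃ d : Fin m → V, G.IsNonMetricCycle d := by
  wlog hlt : i < j generalizing i j
  · have hne : i ≠ j := fun h => G.adj_irrefl _ (h ▸ hij)
    exact this (G.adj_symm _ _ hij) hi hj (lt_of_le_of_ne (not_lt.1 hlt) hne.symm)
  obtain ⟨hcyc, i₀, hlong⟩ := hc
  have : NeZero n := ⟨by have := hcyc.1; omega⟩
  have hab : i.val + 2 ≤ j.val := by
    by_contra h
    exact hj (Fin.ext (by rw [Fin.val_cycSucc_of_lt (by omega)]; omega))
  have hba : j.val + 2 ≤ i.val + n := by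
    by_contra h
    apply hi
    ext
    rw [Fin.val_cycSucc, show j.val + 1 = n by omega, Nat.mod_self]
    omega
  obtain ⟨r, hr, rfl⟩ : ∃ r ∈ Ico i.val (i.val + n), (r : Fin n) = i₀ :=
    if h : i.val ≤ i₀.val then ⟨i₀.val, by simp; omega, by simp⟩
    else ⟨i₀.val + n, by simp; omega, by simp⟩
  have hlong' : G.cycleLen c - G.label (c r) (c (r + 1)) < G.label (c r) (c (r + 1)) := by
    simpa [IsLongEdge, Fin.cycSucc_eq_add_one] using hlong
  rw [Finset.mem_Ico] at hr
  rcases lt_or_ge r j with hrj | hjr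
  · exact hcyc.exists_shorter_isNonMetricCycle_of_chord hab hba (by simpa using hij)
      (by simp; omega) hlong'
  · -- the long edge is on the other arc: cut along the same chord, read as `c j c (i + n)`
    refine hcyc.exists_shorter_isNonMetricCycle_of_chord (a := j) (b := i + n) hba (by omega) ?_
      (by simp; omega) hlong'
    simpa using G.adj_symm _ _ hij

end ELGraph

theorem contains_induced_nonmetric_cycle_general {V : Type*} (G : ELGraph V)
    {n : ℕ} (c : Fin n → V) (hc : G.IsNonMetricCycle c) :
    ∃ (m : ℕ) (c' : Fin m → V), G.IsInducedCycle c' ∧ G.IsNonMetricCycle c' := by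
  induction n using Nat.strong_induction_on with
  | _ n ih =>
    by_cases hind : ∀ i j, G.Adj (c i) (c j) → j = i.cycSucc ∨ i = j.cycSucc
    · exact ⟨n, c, ⟨hc.1, hind⟩, hc⟩
    · push Not at hind
      obtain ⟨i, j, hij, hj, hi⟩ := hind
      obtain ⟨m, hm, d, hd⟩ := hc.exists_shorter_of_chord hij hj hi
      exact ih m hm d hd

/-- If an `ℝ>0`-edge-labelled graph `G` contains a non-metric cycle, then `G` contains an
induced non-metric cycle. -/
theorem contains_induced_nonmetric_cycle {V : Type*} [Fintype V] (G : ELGraph V)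
    {n : ℕ} (c : Fin n → V) (hc : G.IsNonMetricCycle c) :
    ∃ (m : ℕ) (c' : Fin m → V), G.IsInducedCycle c' ∧ G.IsNonMetricCycle c' :=
  contains_induced_nonmetric_cycle_general G c hc
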